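/- arXiv:1909.02421 — 2 statements merged into one kernel-verified Lean document; each statement's English description precedes it below -/
import Mathlib

section
/- For every k ≥ 3, the k-swap game with k²−2 strategic agents of each of the k types, whose topology is the tree with root α, a set B of k(k−1)−1 children of α, and k leaf children attached to each node of B, admits no equilibrium assignment. -/
open Finset

namespace SwapGame

/-- Build a simple graph from a (not necessarily symmetric) boolean relation
by symmetrizing it and removing loops. -/
def mkGraph {V : Type*} (r : V → V → Bool) : SimpleGraph V where
  Adj a b := a ≠ b ∧ (r a b ∨ r b a)
  symm := ⟨fun a b h => ⟨Ne.symm h.1, Or.symm h.2⟩⟩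
  loopless := ⟨fun a h => h.1 rfl⟩

instance mkGraph.instDecidableRel {V : Type*} [DecidableEq V] (r : V → V → Bool) :
    DecidableRel (mkGraph r).Adj :=
  fun a b => inferInstanceAs (Decidable (a ≠ b ∧ (r a b ∨ r b a)))

variable {A V K : Type*} [Fintype V] [DecidableEq A] [DecidableEq V] [DecidableEq K]

/-- The assignment obtained from `σ` by swapping the locations of agents `i` and `j`. -/
def swapA (σ : A ≃ V) (i j : A) : A ≃ V := (Equiv.swap i j).trans σ

/-- The utility of agent `i` under assignment `σ`: the fraction of the neighbors of the
node of `i` that are occupied by agents of the same type (friends of `i`). -/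
def util (G : SimpleGraph V) [DecidableRel G.Adj] (c : A → K) (σ : A ≃ V) (i : A) : ℚ :=
  (((G.neighborFinset (σ i)).filter (fun w => c (σ.symm w) = c i)).card : ℚ) /
    ((G.neighborFinset (σ i)).card : ℚ)

/-- Agents `i` and `j` both strictly increase their utility by swapping their locations. -/
def improving (G : SimpleGraph V) [DecidableRel G.Adj] (c : A → K) (σ : A ≃ V)
    (i j : A) : Prop :=
  util G c σ i < util G c (swapA σ i j) i ∧ util G c σ j < util G c (swapA σ i j) j

/-- An assignment is an equilibrium if no pair of agents can both strictly increase
their utility by swapping positions. -/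
def isEquilibrium (G : SimpleGraph V) [DecidableRel G.Adj] (c : A → K) (σ : A ≃ V) : Prop :=
  ¬ ∃ i j : A, improving G c σ i j

/-- The social welfare of an assignment: the sum of the utilities of all agents. -/
def SW [Fintype A] (G : SimpleGraph V) [DecidableRel G.Adj] (c : A → K) (σ : A ≃ V) : ℚ :=
  ∑ i : A, util G c σ i

/-- Agent `i` is exposed: at least one neighbor is occupied by an agent of another type. -/
def exposed (G : SimpleGraph V) [DecidableRel G.Adj] (c : A → K) (σ : A ≃ V) (i : A) : Prop :=
  ((G.neighborFinset (σ i)).filter (fun w => c (σ.symm w) ≠ c i)).Nonempty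

instance exposed.instDecidable (G : SimpleGraph V) [DecidableRel G.Adj] (c : A → K)
    (σ : A ≃ V) : DecidablePred (exposed G c σ) :=
  fun _ => inferInstanceAs (Decidable (Finset.Nonempty _))

/-- The degree of integration of an assignment: the number of exposed agents. -/
def DI [Fintype A] (G : SimpleGraph V) [DecidableRel G.Adj] (c : A → K) (σ : A ≃ V) : ℕ :=
  (univ.filter (fun i : A => exposed G c σ i)).card

end SwapGame

namespace SwapGame

/-- The three-layer tree topology for `k`-swap games: a root, a set `B` of
`k(k-1)-1` middle nodes (children of the root), and `k` leaf children per middle node. -/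
inductive TV (k : ℕ) where
  | root : TV k
  | mid : Fin (k*(k-1)-1) → TV k
  | leaf : Fin (k*(k-1)-1) → Fin k → TV k
  deriving DecidableEq, Fintype

def adjT {k : ℕ} : TV k → TV k → Bool
  | .root, .mid _ => true
  | .mid i, .leaf j _ => i == j
  | _, _ => false

abbrev GT (k : ℕ) : SimpleGraph (TV k) := mkGraph (@adjT k)

/-- Agents: `k` types with `k^2 - 2` agents each; the type of an agent is its first
component. -/
abbrev AgT (k : ℕ) := Fin k × Fin (k^2 - 2)

end SwapGame

/-!
In an equilibrium two swaps are excluded, both between non-adjacent nodes, so that each agent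
simply inherits the other's neighbourhood: a leaf agent whose parent has another type `u`
against the agent at another mid node of type `u` that has a friend of the leaf agent and a
non-friend among its neighbours, and such a leaf agent below a mid node of the root's type `t₀`
against the root agent, when its own type occupies some mid node. Hence the leaves of a type
`q` below mid nodes of a type `u ≠ q` all hang below a single mid node; counting shows that
every type `q ≠ t₀` occupies a mid node, so mid nodes of type `t₀` carry only leaves of type
`t₀`. Since `k + 1 ∤ k² - 3`, the type `t₀` does not exactly fill the root, some mid nodes and
their leaves, so some leaf of type `t₀` hangs below a mid node `b` of a type `u ≠ t₀`. Then `b`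
is the only mid node of type `u`, and `u` has at most `1 + (k - 1) + (k - 2) k < k² - 2` agents.
-/

namespace SwapGame

section FriendRatio

variable {A V K : Type*} [Fintype V] [DecidableEq K]
  (G : SimpleGraph V) [DecidableRel G.Adj] (c : A → K) (σ : A ≃ V)

def friendRatio (v : V) (a : K) : ℚ :=
  #{w ∈ G.neighborFinset v | c (σ.symm w) = a} / #(G.neighborFinset v)

theorem util_eq_friendRatio (i : A) : util G c σ i = friendRatio G c σ (σ i) (c i) := rfl

variable {G c σ}

theorem friendRatio_pos {v w : V} {a : K} (hw : G.Adj v w) (ha : c (σ.symm w) = a) :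
    0 < friendRatio G c σ v a := by
  have hmem : w ∈ G.neighborFinset v := (G.mem_neighborFinset v w).2 hw
  exact div_pos (by exact_mod_cast card_pos.2 ⟨w, mem_filter.2 ⟨hmem, ha⟩⟩)
    (by exact_mod_cast card_pos.2 ⟨w, hmem⟩)

theorem friendRatio_lt_one {v w : V} {a : K} (hw : G.Adj v w) (ha : c (σ.symm w) ≠ a) :
    friendRatio G c σ v a < 1 := by
  have hmem : w ∈ G.neighborFinset v := (G.mem_neighborFinset v w).2 hw
  rw [friendRatio, div_lt_one (by exact_mod_cast card_pos.2 ⟨w, hmem⟩)]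
  exact_mod_cast card_lt_card (filter_ssubset.2 ⟨w, hmem, ha⟩)

variable [DecidableEq A]

theorem util_swapA_left {i j : A} (h : ¬ G.Adj (σ i) (σ j)) :
    util G c (swapA σ i j) i = friendRatio G c σ (σ j) (c i) := by
  have hσ : swapA σ i j i = σ j := by simp [swapA]
  rw [util_eq_friendRatio, hσ, friendRatio, friendRatio]
  congr 3
  refine filter_congr fun w hw => ?_
  rw [G.mem_neighborFinset] at hw
  have hi : σ.symm w ≠ i := by rintro rfl; simp at h; exact h hw.symm
  have hj : σ.symm w ≠ j := by rintro rfl; simp at hw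
  simp [swapA, Equiv.swap_apply_of_ne_of_ne hi hj]

theorem util_swapA_right {i j : A} (h : ¬ G.Adj (σ i) (σ j)) :
    util G c (swapA σ i j) j = friendRatio G c σ (σ i) (c j) := by
  rw [show swapA σ i j = swapA σ j i by simp [swapA, Equiv.swap_comm]]
  exact util_swapA_left fun h' => h h'.symm

theorem improving_iff_of_not_adj {i j : A} (h : ¬ G.Adj (σ i) (σ j)) :
    improving G c σ i j ↔ friendRatio G c σ (σ i) (c i) < friendRatio G c σ (σ j) (c i) ∧
      friendRatio G c σ (σ j) (c j) < friendRatio G c σ (σ i) (c j) := by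
  rw [improving, util_swapA_left h, util_swapA_right h]
  rfl

end FriendRatio

section Tree

variable {k : ℕ}

theorem adj_mid_root (b : Fin (k*(k-1)-1)) : (GT k).Adj (.mid b) .root := by
  simp [mkGraph, adjT]

theorem adj_mid_leaf (b : Fin (k*(k-1)-1)) (j : Fin k) : (GT k).Adj (.mid b) (.leaf b j) := by
  simp [mkGraph, adjT]

theorem not_adj_leaf_root (b : Fin (k*(k-1)-1)) (j : Fin k) :
    ¬ (GT k).Adj (.leaf b j) .root := by
  simp [mkGraph, adjT]

theorem not_adj_leaf_mid {b b' : Fin (k*(k-1)-1)} (h : b ≠ b') (j : Fin k) :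
    ¬ (GT k).Adj (.leaf b j) (.mid b') := by
  simp [mkGraph, adjT, Ne.symm h]

theorem neighborFinset_leaf (b : Fin (k*(k-1)-1)) (j : Fin k) :
    (GT k).neighborFinset (.leaf b j) = {.mid b} := by
  ext w
  cases w <;> simp [mkGraph, adjT]

theorem friendRatio_leaf {A K : Type*} [DecidableEq K] (c : A → K) (σ : A ≃ TV k)
    (b : Fin (k*(k-1)-1)) (j : Fin k) (a : K) :
    friendRatio (GT k) c σ (.leaf b j) a = if c (σ.symm (.mid b)) = a then 1 else 0 := by
  rw [friendRatio, neighborFinset_leaf, filter_singleton]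
  split_ifs <;> simp

def TV.equivSum : Unit ⊕ Fin (k*(k-1)-1) ⊕ (Fin (k*(k-1)-1) × Fin k) ≃ TV k where
  toFun
    | .inl _ => .root
    | .inr (.inl b) => .mid b
    | .inr (.inr p) => .leaf p.1 p.2
  invFun
    | .root => .inl ()
    | .mid b => .inr (.inl b)
    | .leaf b j => .inr (.inr (b, j))
  left_inv := by rintro (_ | b | ⟨b, j⟩) <;> rfl
  right_inv v := by cases v <;> rfl

theorem card_filter_tv (P : TV k → Prop) [DecidablePred P] :
    #{v | P v} = (if P .root then 1 else 0) + #{b | P (.mid b)} +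
      #{p : Fin (k*(k-1)-1) × Fin k | P (.leaf p.1 p.2)} := by
  simp only [card_filter]
  rw [← TV.equivSum.sum_comp, Fintype.sum_sum_type, Fintype.sum_sum_type, Fintype.sum_unique,
    add_assoc]
  rfl

end Tree

section Equilibrium

variable {k : ℕ} {A K : Type*} [DecidableEq K] {c : A → K} {σ : A ≃ TV k}

variable (c σ) in
def leafCount (q u : K) : ℕ :=
  #{p : Fin (k*(k-1)-1) × Fin k | c (σ.symm (.leaf p.1 p.2)) = q ∧ c (σ.symm (.mid p.1)) = u}

theorem card_leaves_eq_sum_leafCount [Fintype K] (q : K) :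
    #{p : Fin (k*(k-1)-1) × Fin k | c (σ.symm (.leaf p.1 p.2)) = q} =
      ∑ u, leafCount c σ q u := by
  rw [card_eq_sum_card_fiberwise (f := fun p => c (σ.symm (.mid p.1))) (t := univ)
    fun _ _ => mem_univ _]
  simp only [filter_filter, leafCount]

variable [DecidableEq A]

theorem improving_leaf_mid {b₁ b₂ : Fin (k*(k-1)-1)} {j : Fin k} {w : TV k} (hb : b₁ ≠ b₂)
    (hforeign : c (σ.symm (.leaf b₁ j)) ≠ c (σ.symm (.mid b₁)))
    (hmid : c (σ.symm (.mid b₂)) = c (σ.symm (.mid b₁)))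
    (hw : (GT k).Adj (.mid b₂) w) (hfriend : c (σ.symm w) = c (σ.symm (.leaf b₁ j))) :
    improving (GT k) c σ (σ.symm (.leaf b₁ j)) (σ.symm (.mid b₂)) := by
  rw [improving_iff_of_not_adj (by simpa using not_adj_leaf_mid hb j)]
  simp only [Equiv.apply_symm_apply, friendRatio_leaf, if_neg hforeign.symm, if_pos hmid.symm]
  exact ⟨friendRatio_pos hw hfriend, friendRatio_lt_one hw (hfriend ▸ hmid ▸ hforeign)⟩

theorem improving_leaf_root {b₁ b : Fin (k*(k-1)-1)} {j : Fin k}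
    (hroot : c (σ.symm (.mid b₁)) = c (σ.symm .root))
    (hforeign : c (σ.symm (.leaf b₁ j)) ≠ c (σ.symm .root))
    (hb : c (σ.symm (.mid b)) = c (σ.symm (.leaf b₁ j))) :
    improving (GT k) c σ (σ.symm (.leaf b₁ j)) (σ.symm .root) := by
  rw [improving_iff_of_not_adj (by simpa using not_adj_leaf_root b₁ j)]
  simp only [Equiv.apply_symm_apply, friendRatio_leaf, if_neg (hroot ▸ hforeign).symm,
    if_pos hroot]
  exact ⟨friendRatio_pos (adj_mid_root b).symm hb,
    friendRatio_lt_one (adj_mid_root b).symm (hb ▸ hforeign)⟩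

variable (heq : isEquilibrium (GT k) c σ)
include heq

theorem eq_of_foreign_leaf {b₁ b₂ : Fin (k*(k-1)-1)} {j : Fin k} {w : TV k}
    (hforeign : c (σ.symm (.leaf b₁ j)) ≠ c (σ.symm (.mid b₁)))
    (hmid : c (σ.symm (.mid b₂)) = c (σ.symm (.mid b₁)))
    (hw : (GT k).Adj (.mid b₂) w) (hfriend : c (σ.symm w) = c (σ.symm (.leaf b₁ j))) :
    b₁ = b₂ := by
  by_contra hb
  exact heq ⟨_, _, improving_leaf_mid hb hforeign hmid hw hfriend⟩

theorem leafCount_le {q u : K} (hqu : q ≠ u) : leafCount c σ q u ≤ k := by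
  rw [leafCount]
  obtain h | ⟨⟨b₀, j₀⟩, h₀⟩ := (filter (fun p : Fin (k*(k-1)-1) × Fin k =>
    c (σ.symm (.leaf p.1 p.2)) = q ∧ c (σ.symm (.mid p.1)) = u) univ).eq_empty_or_nonempty
  · simp [h]
  calc _ ≤ #({b₀} ×ˢ (univ : Finset (Fin k))) := by
        refine card_le_card fun ⟨b, j⟩ hp => ?_
        simp only [mem_filter, mem_univ, true_and] at hp h₀
        have : b = b₀ := eq_of_foreign_leaf heq (by rw [hp.1, hp.2]; exact hqu)
          (by rw [hp.2, h₀.2]) (adj_mid_leaf b₀ j₀) (by rw [hp.1, h₀.1])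
        simp [this]
    _ = k := by simp

theorem mid_ne_of_foreign_leaf_of_root {b₁ : Fin (k*(k-1)-1)} {j : Fin k}
    (hroot : c (σ.symm (.mid b₁)) = c (σ.symm .root))
    (hforeign : c (σ.symm (.leaf b₁ j)) ≠ c (σ.symm .root)) (b : Fin (k*(k-1)-1)) :
    c (σ.symm (.mid b)) ≠ c (σ.symm (.leaf b₁ j)) :=
  fun hb => heq ⟨_, _, improving_leaf_root hroot hforeign hb⟩

theorem mid_eq_of_root_leaf {b b' : Fin (k*(k-1)-1)} {j : Fin k}
    (hleaf : c (σ.symm (.leaf b j)) = c (σ.symm .root))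
    (hmid : c (σ.symm (.mid b)) ≠ c (σ.symm .root))
    (hb' : c (σ.symm (.mid b')) = c (σ.symm (.mid b))) : b' = b :=
  (eq_of_foreign_leaf heq (by rw [hleaf]; exact Ne.symm hmid) hb' (adj_mid_root b')
    hleaf.symm).symm

theorem card_mid_eq_one_of_root_leaf {b : Fin (k*(k-1)-1)} {j : Fin k}
    (hleaf : c (σ.symm (.leaf b j)) = c (σ.symm .root))
    (hmid : c (σ.symm (.mid b)) ≠ c (σ.symm .root)) :
    #{b' | c (σ.symm (.mid b')) = c (σ.symm (.mid b))} = 1 := by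
  refine card_eq_one.2 ⟨b, eq_singleton_iff_unique_mem.2 ⟨by simp, fun b' hb' => ?_⟩⟩
  exact mid_eq_of_root_leaf heq hleaf hmid (mem_filter.1 hb').2

theorem leafCount_self_le_of_root_leaf {b : Fin (k*(k-1)-1)} {j : Fin k}
    (hleaf : c (σ.symm (.leaf b j)) = c (σ.symm .root))
    (hmid : c (σ.symm (.mid b)) ≠ c (σ.symm .root)) :
    leafCount c σ (c (σ.symm (.mid b))) (c (σ.symm (.mid b))) ≤ k - 1 := by
  calc _ ≤ #({b} ×ˢ (univ.erase j)) := by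
        refine card_le_card fun ⟨b', j'⟩ hp => ?_
        simp only [mem_filter, mem_univ, true_and] at hp
        obtain rfl := mid_eq_of_root_leaf heq hleaf hmid hp.2
        simp only [mem_product, mem_singleton, mem_erase, mem_univ, true_and, and_true]
        rintro rfl
        exact hmid (hp.1 ▸ hleaf)
    _ = k - 1 := by simp

end Equilibrium

section Counting

variable {k : ℕ}

theorem card_occupied (σ : AgT k ≃ TV k) (q : Fin k) : #{v | (σ.symm v).1 = q} = k^2 - 2 := by
  simp only [card_filter]
  rw [← σ.sum_comp, Fintype.sum_prod_type]
  simp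

theorem sq_sub_two_eq_add_leafCount (σ : AgT k ≃ TV k) (q : Fin k) :
    k^2 - 2 = (if (σ.symm .root).1 = q then 1 else 0) + #{b | (σ.symm (.mid b)).1 = q} +
      ∑ u, leafCount Prod.fst σ q u := by
  rw [← card_leaves_eq_sum_leafCount, ← card_filter_tv (fun v => (σ.symm v).1 = q),
    card_occupied]

variable {σ : AgT k ≃ TV k} (heq : isEquilibrium (GT k) Prod.fst σ) (hk : 3 ≤ k)
include heq hk

theorem exists_mid_of_ne_root {q : Fin k} (hq : q ≠ (σ.symm .root).1) :
    ∃ b, (σ.symm (.mid b)).1 = q := by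
  by_contra! h
  have hcount := sq_sub_two_eq_add_leafCount σ q
  have hself : leafCount Prod.fst σ q q = 0 := by simp [leafCount, h]
  have hsum : ∑ u, leafCount Prod.fst σ q u ≤ (k - 1) * k := by
    rw [← add_sum_erase _ _ (mem_univ q), hself, zero_add]
    refine (sum_le_card_nsmul _ _ k fun u hu => ?_).trans (by simp)
    exact leafCount_le heq (ne_of_mem_erase hu).symm
  simp only [if_neg (Ne.symm hq), h, filter_false, card_empty] at hcount
  zify [(by nlinarith : 2 ≤ k ^ 2), (by omega : 1 ≤ k)] at hcount hsum
  nlinarith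

theorem leaf_eq_root_of_mid_eq_root {b : Fin (k*(k-1)-1)} {j : Fin k}
    (hb : (σ.symm (.mid b)).1 = (σ.symm .root).1) :
    (σ.symm (.leaf b j)).1 = (σ.symm .root).1 := by
  by_contra hne
  obtain ⟨b', hb'⟩ := exists_mid_of_ne_root heq hk hne
  exact mid_ne_of_foreign_leaf_of_root heq hb hne b' hb'

theorem leafCount_root_eq_zero {q : Fin k} (hq : q ≠ (σ.symm .root).1) :
    leafCount Prod.fst σ q (σ.symm .root).1 = 0 := by
  simp only [leafCount, card_eq_zero, filter_eq_empty_iff]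
  rintro ⟨b, j⟩ - ⟨hleaf, hb⟩
  exact hq (hleaf ▸ leaf_eq_root_of_mid_eq_root heq hk hb)

theorem exists_root_leaf_below_foreign_mid :
    ∃ b j, (σ.symm (.leaf b j)).1 = (σ.symm .root).1 ∧
      (σ.symm (.mid b)).1 ≠ (σ.symm .root).1 := by
  by_contra! h
  have hleaves : ({p | (σ.symm (.leaf p.1 p.2)).1 = (σ.symm .root).1} : Finset (_ × Fin k))
      = ({b | (σ.symm (.mid b)).1 = (σ.symm .root).1} : Finset _) ×ˢ univ := by
    ext ⟨b, j⟩
    simpa using ⟨h b j, leaf_eq_root_of_mid_eq_root heq hk⟩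
  have hcount := card_filter_tv fun v => (σ.symm v).1 = (σ.symm .root).1
  rw [card_occupied, if_pos rfl, hleaves, card_product, card_univ, Fintype.card_fin] at hcount
  generalize #{b | (σ.symm (.mid b)).1 = (σ.symm .root).1} = m at hcount
  have hcount' : k ^ 2 = 3 + m + m * k := by omega
  rcases le_or_gt k (m + 1) with hm | hm <;> nlinarith

end Counting

/-- for every `k ≥ 3`, the `k`-swap game with `k² − 2` strategic agents of
each of the `k` types on the three-layer tree (root, `k(k−1)−1` middle nodes, `k` leaves
per middle node) admits no equilibrium assignment. -/
theorem no_equilibrium_k_types (k : ℕ) (hk : 3 ≤ k) (σ : AgT k ≃ TV k) :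
    ¬ isEquilibrium (GT k) Prod.fst σ := by
  intro heq
  obtain ⟨b, j, hleaf, hmid⟩ := exists_root_leaf_below_foreign_mid heq hk
  set t₀ := (σ.symm .root).1
  set u := (σ.symm (.mid b)).1
  have hother : #(((univ : Finset (Fin k)).erase u).erase t₀) = k - 2 := by
    rw [card_erase_of_mem (mem_erase.2 ⟨Ne.symm hmid, mem_univ _⟩), card_erase_of_mem
      (mem_univ _), card_univ, Fintype.card_fin]
    omega
  have hsum : ∑ w, leafCount Prod.fst σ u w ≤ (k - 1) + (k - 2) * k := by
    rw [← add_sum_erase _ _ (mem_univ u),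
      ← add_sum_erase _ _ (mem_erase.2 ⟨Ne.symm hmid, mem_univ t₀⟩),
      leafCount_root_eq_zero heq hk hmid, zero_add, ← hother, ← smul_eq_mul]
    refine add_le_add (leafCount_self_le_of_root_leaf heq hleaf hmid)
      (sum_le_card_nsmul _ _ k fun w hw => ?_)
    exact leafCount_le heq (ne_of_mem_erase (mem_of_mem_erase hw)).symm
  have hcount := sq_sub_two_eq_add_leafCount σ u
  rw [if_neg (Ne.symm hmid), card_mid_eq_one_of_root_leaf heq hleaf hmid] at hcount
  zify [(by nlinarith : 2 ≤ k ^ 2), (by omega : 1 ≤ k), (by omega : 2 ≤ k)] at hcount hsum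
  nlinarith

end SwapGame
end

section
/- In every 2-swap game with only strategic agents, n ≥ 2 agents, at least two agents of each of the two types, and a connected topology, every equilibrium assignment v satisfies SW(v) ≥ 1. Consequently, since the optimal social welfare is at most n, the social price of anarchy of such games is at most n. -/
open Finset

/-! If agents `i` and `j` have different types, then after swapping, the friends of `i` around
`j`'s old node are exactly the non-friends of `j` there, except `j` itself when the two nodes are
adjacent; hence `u'ᵢ = 1 - uⱼ - [σ i ~ σ j] / deg (σ j)`. Since the pair does not improve, some
agent of type 0 and some agent of type 1 on non-adjacent nodes already give `uᵢ + uⱼ ≥ 1`.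
Otherwise every node has at least two neighbours of the other type, each such pair gives
`uᵢ + uⱼ ≥ 1/2`, and two disjoint pairs give `SW ≥ 1`. -/

namespace SwapGame

section Swap

variable {A V : Type*} [DecidableEq A]

@[simp]
theorem swapA_apply_left (σ : A ≃ V) (i j : A) : swapA σ i j i = σ j := by
  simp [swapA]

theorem swapA_comm (σ : A ≃ V) (i j : A) : swapA σ j i = swapA σ i j := by
  rw [swapA, swapA, Equiv.swap_comm]

@[simp]
theorem swapA_symm_apply_apply (σ : A ≃ V) (i j a : A) :
    (swapA σ i j).symm (σ a) = Equiv.swap i j a := by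
  simp [swapA]

end Swap

section Utility

variable {A V K : Type*} [Fintype V] [DecidableEq K] (G : SimpleGraph V) [DecidableRel G.Adj]
  (c : A → K)

theorem util_nonneg (σ : A ≃ V) (i : A) : 0 ≤ util G c σ i := by
  unfold util
  positivity

theorem util_le_one (σ : A ≃ V) (i : A) : util G c σ i ≤ 1 :=
  div_le_one_of_le₀ (mod_cast card_filter_le _ _) (Nat.cast_nonneg _)

theorem sum_util_le_SW [Fintype A] (σ : A ≃ V) (s : Finset A) :
    ∑ i ∈ s, util G c σ i ≤ SW G c σ :=
  sum_le_univ_sum_of_nonneg fun i => util_nonneg G c σ i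

theorem util_add_util_le_SW [Fintype A] [DecidableEq A] (σ : A ≃ V) {i j : A} (hij : i ≠ j) :
    util G c σ i + util G c σ j ≤ SW G c σ := by
  simpa [sum_pair hij] using sum_util_le_SW G c σ {i, j}

theorem SW_le_card [Fintype A] (σ : A ≃ V) : SW G c σ ≤ Fintype.card A := by
  unfold SW
  simpa using sum_le_sum fun i (_ : i ∈ univ) => util_le_one G c σ i

theorem util_swapA_le_or_of_isEquilibrium [DecidableEq A] {σ : A ≃ V}
    (heq : isEquilibrium G c σ) (i j : A) :
    util G c (swapA σ i j) i ≤ util G c σ i ∨ util G c (swapA σ j i) j ≤ util G c σ j := by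
  rw [swapA_comm σ i j]
  by_contra! h
  exact heq ⟨i, j, h⟩

end Utility

theorem _root_.SimpleGraph.two_le_degree_of_adj_of_adj {V : Type*} {G : SimpleGraph V}
    {v a b : V} [Fintype (G.neighborSet v)] (hab : a ≠ b) (ha : G.Adj v a) (hb : G.Adj v b) :
    2 ≤ G.degree v := by
  rw [← G.card_neighborFinset_eq_degree]
  exact one_lt_card.mpr ⟨a, by simpa, b, by simpa, hab⟩

section TwoTypes

variable {A V : Type*} [Fintype V] [DecidableEq A] (G : SimpleGraph V) [DecidableRel G.Adj]
  (c : A → Fin 2)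

theorem filter_friends_swapA_left [DecidableEq V] (σ : A ≃ V) {i j : A} (hij : c i ≠ c j) :
    (G.neighborFinset (σ j)).filter (fun w => c ((swapA σ i j).symm w) = c i) =
      ((G.neighborFinset (σ j)).filter (fun w => c (σ.symm w) ≠ c j)).erase (σ i) := by
  ext w
  obtain ⟨a, rfl⟩ := σ.surjective w
  simp only [mem_filter, mem_erase, SimpleGraph.mem_neighborFinset, swapA_symm_apply_apply,
    Equiv.symm_apply_apply, σ.injective.ne_iff]
  by_cases hai : a = i
  · subst hai
    simp [hij.symm]
  by_cases haj : a = j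
  · subst haj
    simp
  rw [Equiv.swap_apply_of_ne_of_ne hai haj]
  have hfin2 : c a = c i ↔ c a ≠ c j := by omega
  tauto

theorem util_swapA_left_s6 (σ : A ≃ V) {i j : A} (hij : c i ≠ c j) (hd : 0 < G.degree (σ j)) :
    util G c (swapA σ i j) i =
      1 - util G c σ j - if G.Adj (σ j) (σ i) then (G.degree (σ j) : ℚ)⁻¹ else 0 := by
  classical
  unfold util
  rw [swapA_apply_left, filter_friends_swapA_left G c σ hij, card_erase_eq_ite,
    ← G.card_neighborFinset_eq_degree]
  set N := G.neighborFinset (σ j)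
  have hsplit := card_filter_add_card_filter_not (s := N) (p := fun w => c (σ.symm w) = c j)
  have hdN : (N.card : ℚ) ≠ 0 := by simp [N, hd.ne']
  simp only [← ne_eq] at hsplit
  by_cases ha : G.Adj (σ j) (σ i)
  · have hmem : σ i ∈ N.filter (fun w => c (σ.symm w) ≠ c j) := by simp [N, ha, hij]
    have hpos := card_pos.mpr ⟨_, hmem⟩
    rw [if_pos hmem, if_pos ha, Nat.cast_sub hpos]
    field_simp
    rw [← hsplit]
    push_cast
    ring
  · have hmem : σ i ∉ N.filter (fun w => c (σ.symm w) ≠ c j) := by simp [N, ha]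
    rw [if_neg hmem, if_neg ha]
    field_simp
    rw [← hsplit]
    push_cast
    ring

theorem one_le_util_add_util_of_not_adj {σ : A ≃ V} (heq : isEquilibrium G c σ) {i j : A}
    (hij : c i ≠ c j) (hna : ¬ G.Adj (σ i) (σ j)) (hdi : 0 < G.degree (σ i))
    (hdj : 0 < G.degree (σ j)) :
    1 ≤ util G c σ i + util G c σ j := by
  have hi := util_swapA_left_s6 G c σ hij hdj
  have hj := util_swapA_left_s6 G c σ hij.symm hdi
  rw [if_neg (fun h => hna h.symm)] at hi
  rw [if_neg hna] at hj
  rcases util_swapA_le_or_of_isEquilibrium G c heq i j with h | h <;> linarith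

theorem half_le_util_add_util_of_adj {σ : A ≃ V} (heq : isEquilibrium G c σ) {i j : A}
    (hij : c i ≠ c j) (ha : G.Adj (σ i) (σ j)) (hdi : 2 ≤ G.degree (σ i))
    (hdj : 2 ≤ G.degree (σ j)) :
    1 / 2 ≤ util G c σ i + util G c σ j := by
  have hi := util_swapA_left_s6 G c σ hij (by omega)
  have hj := util_swapA_left_s6 G c σ hij.symm (by omega)
  rw [if_pos ha.symm] at hi
  rw [if_pos ha] at hj
  have hdi' : (G.degree (σ i) : ℚ)⁻¹ ≤ 2⁻¹ := inv_anti₀ two_pos (mod_cast hdi)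
  have hdj' : (G.degree (σ j) : ℚ)⁻¹ ≤ 2⁻¹ := inv_anti₀ two_pos (mod_cast hdj)
  rcases util_swapA_le_or_of_isEquilibrium G c heq i j with h | h <;> linarith

theorem one_le_SW_of_forall_adj [Fintype A] {σ : A ≃ V} (heq : isEquilibrium G c σ)
    {i₀ i₁ j₀ j₁ : A} (hi : i₀ ≠ i₁) (hj : j₀ ≠ j₁) (hci₀ : c i₀ = 0) (hci₁ : c i₁ = 0)
    (hcj₀ : c j₀ = 1) (hcj₁ : c j₁ = 1)
    (hadj : ∀ i j, c i = 0 → c j = 1 → G.Adj (σ i) (σ j)) :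
    1 ≤ SW G c σ := by
  have hdeg (k : A) : 2 ≤ G.degree (σ k) := by
    rcases (by omega : c k = 0 ∨ c k = 1) with hk | hk
    · exact G.two_le_degree_of_adj_of_adj (σ.injective.ne hj) (hadj k j₀ hk hcj₀)
        (hadj k j₁ hk hcj₁)
    · exact G.two_le_degree_of_adj_of_adj (σ.injective.ne hi) (hadj i₀ k hci₀ hk).symm
        (hadj i₁ k hci₁ hk).symm
  have hpair {i j : A} (hci : c i = 0) (hcj : c j = 1) :
      1 / 2 ≤ util G c σ i + util G c σ j :=
    half_le_util_add_util_of_adj G c heq (by simp [hci, hcj]) (hadj i j hci hcj) (hdeg i) (hdeg j)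
  have hne {a b : A} (ha : c a = 0) (hb : c b = 1) : a ≠ b := by
    rintro rfl
    simp [ha] at hb
  have hdisj : Disjoint ({i₀, j₀} : Finset A) {i₁, j₁} := by
    simp [hi.symm, hne hci₁ hcj₀, (hne hci₀ hcj₁).symm, hj.symm]
  have hsum := sum_util_le_SW G c σ ({i₀, j₀} ∪ {i₁, j₁})
  rw [sum_union hdisj, sum_pair (hne hci₀ hcj₀), sum_pair (hne hci₁ hcj₁)] at hsum
  linarith [hpair hci₀ hcj₀, hpair hci₁ hcj₁]

end TwoTypes

theorem sw_ge_one_of_equilibrium_general {A V : Type} [Fintype A] [DecidableEq A]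
    [Fintype V] (G : SimpleGraph V) [DecidableRel G.Adj]
    (hconn : G.Connected) (c : A → Fin 2)
    (h0 : 2 ≤ (univ.filter (fun i => c i = 0)).card)
    (h1 : 2 ≤ (univ.filter (fun i => c i = 1)).card)
    (σ : A ≃ V) (heq : isEquilibrium G c σ) :
    1 ≤ SW G c σ ∧ ∀ σ' : A ≃ V, SW G c σ' ≤ (Fintype.card A : ℚ) * SW G c σ := by
  obtain ⟨i₀, hci₀, i₁, hci₁, hi⟩ := one_lt_card.mp h0
  obtain ⟨j₀, hcj₀, j₁, hcj₁, hj⟩ := one_lt_card.mp h1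
  simp only [mem_filter, mem_univ, true_and] at hci₀ hci₁ hcj₀ hcj₁
  have : Nontrivial V := ⟨σ i₀, σ i₁, σ.injective.ne hi⟩
  have hdeg (v : V) : 0 < G.degree v := hconn.preconnected.degree_pos_of_nontrivial v
  have hSW : 1 ≤ SW G c σ := by
    by_cases hadj : ∀ i j, c i = 0 → c j = 1 → G.Adj (σ i) (σ j)
    · exact one_le_SW_of_forall_adj G c heq hi hj hci₀ hci₁ hcj₀ hcj₁ hadj
    · push Not at hadj
      obtain ⟨i, j, hci, hcj, hna⟩ := hadj
      have hij : c i ≠ c j := by simp [hci, hcj]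
      exact (one_le_util_add_util_of_not_adj G c heq hij hna (hdeg _) (hdeg _)).trans
        (util_add_util_le_SW G c σ (ne_of_apply_ne c hij))
  refine ⟨hSW, fun σ' => ?_⟩
  calc SW G c σ' ≤ Fintype.card A := SW_le_card G c σ'
    _ ≤ Fintype.card A * SW G c σ := le_mul_of_one_le_right (Nat.cast_nonneg _) hSW

/-- in every 2-swap game with only strategic agents, `n ≥ 2` agents,
at least two agents of each of the two types, and a connected topology, every
equilibrium assignment has social welfare at least 1; consequently (since the optimal
social welfare is at most `n`) the social price of anarchy is at most `n`. -/
theorem sw_ge_one_of_equilibrium {A V : Type} [Fintype A] [DecidableEq A]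
    [Fintype V] [DecidableEq V] (G : SimpleGraph V) [DecidableRel G.Adj]
    (hconn : G.Connected) (c : A → Fin 2)
    (hn : 2 ≤ Fintype.card A)
    (h0 : 2 ≤ (univ.filter (fun i => c i = 0)).card)
    (h1 : 2 ≤ (univ.filter (fun i => c i = 1)).card)
    (σ : A ≃ V) (heq : isEquilibrium G c σ) :
    1 ≤ SW G c σ ∧ ∀ σ' : A ≃ V, SW G c σ' ≤ (Fintype.card A : ℚ) * SW G c σ :=
  sw_ge_one_of_equilibrium_general G hconn c h0 h1 σ heq

end SwapGame
end
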